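/- Let z_1, …, z_N be pairwise distinct complex numbers. Then each quadratic Gaudin Hamiltonian commutes with the diagonal action of 𝔤: for every x ∈ 𝔤 and every 1 ≤ i ≤ N, one has Δ(x) ∘ H_i = H_i ∘ Δ(x), where Δ(x) = Σ_{j=1}^{N} x^{(j)} is the diagonal action of x on V_1 ⊗ ⋯ ⊗ V_N. -/

import Mathlib

/-!
The diagonal action is a Lie algebra map `x ↦ Δ(x)` whose bracket with an operator `y^{(i)}`
is `⁅x, y⁆^{(i)}`, since operators in different tensor factors commute. Hence `⁅Δ(x), ·⁆` is a
derivation sending `∑ₐ x_a^{(i)} x_a^{(k)}` to the image of `∑ₐ (⁅x, x_a⁆ ⊗ x_a + x_a ⊗ ⁅x, x_a⁆)`,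
which vanishes because the Casimir tensor of an invariant form is invariant: expanding `⁅x, x_a⁆`
in the orthonormal basis, the coefficients `κ(⁅x, x_a⁆, x_c)` are antisymmetric in `a, c`.
-/

open scoped TensorProduct

noncomputable section

variable {𝔤 : Type*} [LieRing 𝔤] [LieAlgebra ℂ 𝔤]
variable {N : ℕ} (V : Fin N → Type*) [∀ i, AddCommGroup (V i)] [∀ i, Module ℂ (V i)]
  [∀ i, LieRingModule 𝔤 (V i)] [∀ i, LieModule ℂ 𝔤 (V i)]

/-- The endomorphism `x^{(i)}` of `V 1 ⊗ ⋯ ⊗ V N` acting as `x` in the `i`-th tensor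
factor and as the identity in the other factors. -/
def opAt (i : Fin N) (x : 𝔤) : Module.End ℂ (⨂[ℂ] j, V j) :=
  PiTensorProduct.map
    (Function.update (fun j => (LinearMap.id : V j →ₗ[ℂ] V j)) i
      (LieModule.toEnd ℂ 𝔤 (V i) x))

/-- The diagonal action `Δ(x) = ∑_j x^{(j)}`. -/
def diagAct (x : 𝔤) : Module.End ℂ (⨂[ℂ] j, V j) :=
  ∑ j, opAt V j x

/-- The quadratic Gaudin Hamiltonian
`H i = ∑_{k ≠ i} (z i - z k)⁻¹ ∑_a x_a^{(i)} ∘ x_a^{(k)}`. -/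
def gaudinH {d : ℕ} (b : Fin d → 𝔤) (z : Fin N → ℂ) (i : Fin N) :
    Module.End ℂ (⨂[ℂ] j, V j) :=
  ∑ k ∈ Finset.univ.erase i, (z i - z k)⁻¹ •
    ∑ a, opAt V i (b a) * opAt V k (b a)

namespace PiTensorProduct

variable {ι R : Type*} [CommSemiring R] [DecidableEq ι] {s : ι → Type*}
  [∀ i, AddCommMonoid (s i)] [∀ i, Module R (s i)]

def mapAt (i : ι) : Module.End R (s i) →ₐ[R] Module.End R (⨂[R] j, s j) :=
  .ofLinearMap ((mapMultilinear R s s).toLinearMap 1 i)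
    (by rw [MultilinearMap.toLinearMap_apply, Function.update_one]; exact PiTensorProduct.map_one)
    (fun f g => by
      simp only [MultilinearMap.toLinearMap_apply, mapMultilinear_apply,
        ← PiTensorProduct.map_mul]
      congr 1
      funext j
      rcases eq_or_ne j i with rfl | h <;> simp [*])

lemma mapAt_apply (i : ι) (f : Module.End R (s i)) :
    mapAt i f = map (Function.update 1 i f) := rfl

lemma commute_mapAt_mapAt {i k : ι} (h : i ≠ k) (f : Module.End R (s i))
    (g : Module.End R (s k)) : Commute (mapAt i f) (mapAt k g) := by
  simp only [Commute, SemiconjBy, mapAt_apply, ← PiTensorProduct.map_mul]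
  congr 1
  funext j
  rcases eq_or_ne j i with rfl | hi
  · simp [Function.update_of_ne h]
  · rcases eq_or_ne j k with rfl | hk <;> simp [*]

end PiTensorProduct

lemma Ring.lie_mul {A : Type*} [Ring A] (a b c : A) : ⁅a, b * c⁆ = ⁅a, b⁆ * c + b * ⁅a, c⁆ := by
  simp only [Ring.lie_def]
  noncomm_ring

section OrthonormalBasis

variable {R L ι : Type*} [CommRing R] [AddCommGroup L] [Module R L] [DecidableEq ι]
  {B : LinearMap.BilinForm R L} {b : Module.Basis ι R L}

lemma Module.Basis.repr_eq_bilinForm_apply_left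
    (horth : ∀ a a', B (b a) (b a') = if a = a' then 1 else 0) (y : L) (c : ι) :
    b.repr y c = B y (b c) := by
  refine LinearMap.congr_fun (b.ext (f₁ := b.coord c) (f₂ := B.flip (b c)) fun a => ?_) y
  simp [horth, Finsupp.single_apply]

lemma Module.Basis.repr_eq_bilinForm_apply_right
    (horth : ∀ a a', B (b a) (b a') = if a = a' then 1 else 0) (y : L) (c : ι) :
    b.repr y c = B (b c) y := by
  refine LinearMap.congr_fun (b.ext (f₁ := b.coord c) (f₂ := B (b c)) fun a => ?_) y
  simp [horth, Finsupp.single_apply, eq_comm]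

end OrthonormalBasis

theorem LinearMap.BilinForm.lieInvariant.sum_apply_lie_add_apply_lie {R L M ι : Type*}
    [CommRing R] [LieRing L] [Module R L] [AddCommGroup M] [Module R M] [Fintype ι] [DecidableEq ι]
    {B : LinearMap.BilinForm R L} {b : Module.Basis ι R L} (hB : B.lieInvariant L)
    (horth : ∀ a a', B (b a) (b a') = if a = a' then 1 else 0)
    (f : L →ₗ[R] L →ₗ[R] M) (x : L) :
    ∑ a, (f ⁅x, b a⁆ (b a) + f (b a) ⁅x, b a⁆) = 0 := by
  have expand_left (y : L) (z : L) : f y z = ∑ c, B y (b c) • f (b c) z := by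
    conv_lhs => rw [← b.sum_repr y]
    simp [b.repr_eq_bilinForm_apply_left horth]
  have expand_right (y : L) (z : L) : f z y = ∑ c, B (b c) y • f z (b c) := by
    conv_lhs => rw [← b.sum_repr y]
    simp [b.repr_eq_bilinForm_apply_right horth]
  calc ∑ a, (f ⁅x, b a⁆ (b a) + f (b a) ⁅x, b a⁆)
      = ∑ a, ∑ c, B ⁅x, b a⁆ (b c) • f (b c) (b a)
          + ∑ a, ∑ c, B (b c) ⁅x, b a⁆ • f (b a) (b c) := by
        simp only [Finset.sum_add_distrib, ← expand_left, ← expand_right]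
    _ = ∑ a, ∑ c, B ⁅x, b a⁆ (b c) • f (b c) (b a)
          - ∑ c, ∑ a, B ⁅x, b a⁆ (b c) • f (b c) (b a) := by
        have skew (a c : ι) : B (b c) ⁅x, b a⁆ = -B ⁅x, b c⁆ (b a) := by rw [hB, neg_neg]
        simp only [skew, neg_smul, Finset.sum_neg_distrib, sub_eq_add_neg]
    _ = 0 := by rw [Finset.sum_comm, sub_self]

attribute [local instance] LieRing.ofAssociativeRing

def opAtLieHom (i : Fin N) : 𝔤 →ₗ⁅ℂ⁆ Module.End ℂ (⨂[ℂ] j, V j) :=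
  (PiTensorProduct.mapAt i).toLieHom.comp (LieModule.toEnd ℂ 𝔤 (V i))

lemma opAtLieHom_apply (i : Fin N) (x : 𝔤) : opAtLieHom V i x = opAt V i x := rfl

lemma lie_opAt_opAt (j i : Fin N) (x y : 𝔤) :
    ⁅opAt V j x, opAt V i y⁆ = if j = i then opAt V i ⁅x, y⁆ else 0 := by
  split_ifs with h
  · subst h
    simp only [← opAtLieHom_apply, LieHom.map_lie]
  · exact commute_iff_lie_eq.mp (PiTensorProduct.commute_mapAt_mapAt h _ _)

lemma lie_diagAct_opAt (x y : 𝔤) (i : Fin N) : ⁅diagAct V x, opAt V i y⁆ = opAt V i ⁅x, y⁆ := by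
  simp [diagAct, sum_lie, lie_opAt_opAt]

lemma commute_diagAct_sum_opAt_mul_opAt {ι : Type*} [Fintype ι] [DecidableEq ι]
    {B : LinearMap.BilinForm ℂ 𝔤} {b : Module.Basis ι ℂ 𝔤} (hB : B.lieInvariant 𝔤)
    (horth : ∀ a a', B (b a) (b a') = if a = a' then 1 else 0) (x : 𝔤) (i k : Fin N) :
    Commute (diagAct V x) (∑ a, opAt V i (b a) * opAt V k (b a)) := by
  rw [commute_iff_lie_eq, Ring.lie_def, Finset.mul_sum, Finset.sum_mul, ← Finset.sum_sub_distrib]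
  simp only [← Ring.lie_def, Ring.lie_mul, lie_diagAct_opAt]
  have h := hB.sum_apply_lie_add_apply_lie horth
    ((LinearMap.mul ℂ (Module.End ℂ (⨂[ℂ] j, V j))).compl₁₂
      (opAtLieHom V i).toLinearMap (opAtLieHom V k).toLinearMap) x
  simp only [LinearMap.compl₁₂_apply, LinearMap.mul_apply', LieHom.coe_toLinearMap,
    opAtLieHom_apply] at h
  exact h

theorem gaudin_hamiltonian_commutes_with_diagonal
    [FiniteDimensional ℂ 𝔤]
    {d : ℕ} (b : Module.Basis (Fin d) ℂ 𝔤)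
    (horth : ∀ a a' : Fin d, killingForm ℂ 𝔤 (b a) (b a') = if a = a' then 1 else 0)
    (z : Fin N → ℂ) (x : 𝔤) (i : Fin N) :
    diagAct V x * gaudinH V (⇑b) z i = gaudinH V (⇑b) z i * diagAct V x :=
  (Commute.sum_right _ _ _ fun k _ =>
    (commute_diagAct_sum_opAt_mul_opAt V (LieModule.traceForm_lieInvariant ℂ 𝔤 𝔤) horth
      x i k).smul_right _).eq
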